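/- arXiv:2009.01504 — 3 statements merged into one kernel-verified Lean document; each statement's English description precedes it below -/
import Mathlib

section
/- For every real α with 1 < α < 2 there exist constants 0 < κ₁ ≤ κ₂ < ∞ such that for all sufficiently large integers n one has κ₁ · n ≤ (c_n^{(α)})^{1/n} ≤ κ₂ · n. -/
/-!
The lower bound only needs the `k = 1` summand of `c_n`: from `(2 - α)_{2n-1} ≥ (2 - α) (2n - 2)!`
and `Γ(n + 3/2) ≥ n!` one gets `c_n ≳ (2/α)^n n! / n^4`, and `n! ≥ (n/e)^n`, `2^n ≫ n^4` give
`c_n ≥ (n/(α e))^n` eventually.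

For the upper bound, `B_{j,1} ≤ j! / ((j + 1)(j + 2))` and `∑_j 1/((j + 1)(j + 2)) ≤ 1` turn the
recursion into `B_{n,k} ≤ n!/k!`. With `Γ(n + k + 1/2) ≤ (n + k)! ≤ k! (3n)^n` each of the `2n`
summands of `c_n` is at most `(2n)! (12n)^n`, whence `c_n ≤ (96 n/α)^n`.
-/

open scoped Real BigOperators
open MeasureTheory Filter Asymptotics

/-- `B_{n,1} = (2-α)_{n-1} / ((n+1)(n+2))`, where `(x)_m` is the rising factorial. -/
noncomputable def B1 (α : ℝ) (n : ℕ) : ℝ :=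
  (ascPochhammer ℝ (n - 1)).eval (2 - α) / ((n + 1 : ℝ) * (n + 2 : ℝ))

/-- The coefficients `B_{n,k}`: `B_{n,1}` as above and
`B_{n,k+1} = (1/(k+1)) Σ_{l=k}^{n-1} C(n,l) B_{n-l,1} B_{l,k}` for `k ≥ 1`. -/
noncomputable def Bc (α : ℝ) : ℕ → ℕ → ℝ
  | _, 0 => 0
  | n, 1 => B1 α n
  | n, (k + 2) =>
      (1 / (k + 2 : ℝ)) *
        ∑ l ∈ Finset.Icc (k + 1) (n - 1),
          (n.choose l : ℝ) * B1 α (n - l) * Bc α l (k + 1)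

/-- The coefficients `c_p^{(α)}`. -/
noncomputable def cC (α : ℝ) : ℕ → ℝ
  | 0 => 1
  | p + 1 =>
      (1 / ((2 * (p + 1)).factorial * Real.sqrt Real.pi)) * (2 / α) ^ (p + 1) *
        ∑ k ∈ Finset.Icc 1 (2 * (p + 1)),
          Bc α (2 * (p + 1)) k * Real.Gamma ((p + 1 : ℝ) + k + 1 / 2) *
            (2 * (α - 1)) ^ k

open Nat Finset Real

theorem ascPochhammer_eval_le_eval {x y : ℝ} (hx : 0 < x) (hxy : x ≤ y) (m : ℕ) :
    (ascPochhammer ℝ m).eval x ≤ (ascPochhammer ℝ m).eval y := by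
  induction m with
  | zero => simp
  | succ m ih =>
    simp only [ascPochhammer_succ_eval]
    have hm : (0 : ℝ) ≤ m := m.cast_nonneg
    exact mul_le_mul ih (by linarith) (by linarith) (ascPochhammer_pos m y (by linarith)).le

theorem ascPochhammer_eval_le_factorial {x : ℝ} (hx : 0 < x) (hx₁ : x ≤ 1) (m : ℕ) :
    (ascPochhammer ℝ m).eval x ≤ m ! := by
  simpa using ascPochhammer_eval_le_eval hx hx₁ m

theorem mul_factorial_le_ascPochhammer_eval {x : ℝ} (hx : 0 < x) (m : ℕ) :
    x * m ! ≤ (ascPochhammer ℝ (m + 1)).eval x := by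
  rw [ascPochhammer_succ_left, Polynomial.eval_mul, Polynomial.eval_X, Polynomial.eval_comp]
  gcongr
  simpa using ascPochhammer_eval_le_eval one_pos (by linarith : 1 ≤ x + 1) m

theorem sum_range_inv_succ_mul_succ_succ (N : ℕ) :
    ∑ j ∈ range N, ((j + 1 : ℝ) * (j + 2))⁻¹ = 1 - (N + 1 : ℝ)⁻¹ := by
  induction N with
  | zero => norm_num
  | succ N ih =>
    rw [sum_range_succ, ih]
    push_cast
    field_simp
    ring

theorem Nat.factorial_add_le_factorial_mul_pow (n k : ℕ) : (n + k)! ≤ k ! * (n + k) ^ n := by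
  have h := Nat.factorial_mul_descFactorial (Nat.le_add_right n k)
  rw [Nat.add_sub_cancel_left] at h
  rw [← h]
  exact Nat.mul_le_mul_left _ (Nat.descFactorial_le_pow _ _)

theorem Real.Gamma_le_Gamma_of_two_le {x y : ℝ} (hx : 2 ≤ x) (hxy : x ≤ y) : Gamma x ≤ Gamma y :=
  Gamma_strictMonoOn_Ici.monotoneOn hx (hx.trans hxy) hxy

theorem Nat.factorial_add_two_mul_le (m : ℕ) :
    (m + 2)! * ((m + 3) * (m + 4)) ≤ (2 * m + 4) ^ 4 * m ! := by
  rw [factorial_succ, factorial_succ]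
  calc _ = (m + 1 + 1) * (m + 1) * ((m + 3) * (m + 4)) * m ! := by ring
    _ ≤ (2 * m + 4) * (2 * m + 4) * ((2 * m + 4) * (2 * m + 4)) * m ! := by
      gcongr ?_ * ?_ * (?_ * ?_) * _ <;> omega
    _ = _ := by ring

theorem le_rpow_one_div_of_pow_le {a x : ℝ} {n : ℕ} (hn : n ≠ 0) (ha : 0 ≤ a) (h : a ^ n ≤ x) :
    a ≤ x ^ (1 / (n : ℝ)) := by
  rw [one_div, le_rpow_inv_iff_of_pos ha ((pow_nonneg ha n).trans h) (by positivity)]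
  exact_mod_cast h

theorem rpow_one_div_le_of_le_pow {a x : ℝ} {n : ℕ} (hn : n ≠ 0) (hx : 0 ≤ x) (ha : 0 ≤ a)
    (h : x ≤ a ^ n) : x ^ (1 / (n : ℝ)) ≤ a := by
  rw [one_div, rpow_inv_le_iff_of_pos hx ha (by positivity)]
  exact_mod_cast h

section Coefficients

variable {α : ℝ}

theorem B1_nonneg (hα : α < 2) (n : ℕ) : 0 ≤ B1 α n := by
  have := ascPochhammer_pos (n - 1) (2 - α) (by linarith)
  unfold B1
  positivity

theorem B1_le (hα₁ : 1 ≤ α) (hα₂ : α < 2) (n : ℕ) : B1 α n ≤ n ! / ((n + 1) * (n + 2)) := by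
  unfold B1
  gcongr
  calc _ ≤ ((n - 1)! : ℝ) := ascPochhammer_eval_le_factorial (by linarith) (by linarith) _
    _ ≤ n ! := mod_cast Nat.factorial_le (Nat.sub_le n 1)

theorem mul_factorial_div_le_B1 (hα : α < 2) (m : ℕ) :
    (2 - α) * m ! / ((m + 3) * (m + 4)) ≤ B1 α (m + 2) := by
  unfold B1
  rw [Nat.add_sub_assoc one_le_two]
  push_cast
  rw [show (m : ℝ) + 2 + 1 = m + 3 by ring, show (m : ℝ) + 2 + 2 = m + 4 by ring]
  gcongr
  exact mul_factorial_le_ascPochhammer_eval (by linarith) m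

theorem sum_choose_mul_B1_mul_factorial_le (hα₁ : 1 ≤ α) (hα₂ : α < 2) {n : ℕ} {s : Finset ℕ}
    (hs : s ⊆ range (n + 1)) : ∑ l ∈ s, (n.choose l : ℝ) * B1 α (n - l) * l ! ≤ n ! := by
  have hterm : ∀ l ∈ range (n + 1),
      (n.choose l : ℝ) * B1 α (n - l) * l ! ≤
        n ! * (((n - l : ℕ) + 1 : ℝ) * ((n - l : ℕ) + 2))⁻¹ := by
    intro l hl
    have hln : l ≤ n := Nat.lt_succ_iff.mp (mem_range.mp hl)
    calc (n.choose l : ℝ) * B1 α (n - l) * l !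
        ≤ n.choose l * ((n - l)! / (((n - l : ℕ) + 1) * ((n - l : ℕ) + 2))) * l ! := by
          gcongr; exact B1_le hα₁ hα₂ _
      _ = n ! * (((n - l : ℕ) + 1 : ℝ) * ((n - l : ℕ) + 2))⁻¹ := by
          rw [← Nat.choose_mul_factorial_mul_factorial hln]
          push_cast
          ring
  calc ∑ l ∈ s, (n.choose l : ℝ) * B1 α (n - l) * l !
      ≤ ∑ l ∈ range (n + 1), (n.choose l : ℝ) * B1 α (n - l) * l ! :=
        sum_le_sum_of_subset_of_nonneg hs fun l _ _ => by have := B1_nonneg hα₂ (n - l); positivity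
    _ ≤ ∑ l ∈ range (n + 1), n ! * (((n - l : ℕ) + 1 : ℝ) * ((n - l : ℕ) + 2))⁻¹ := sum_le_sum hterm
    _ = n ! * ∑ j ∈ range (n + 1), ((j + 1 : ℝ) * (j + 2))⁻¹ := by
        rw [← mul_sum, ← sum_range_reflect (fun j : ℕ => ((j + 1 : ℝ) * (j + 2))⁻¹)]
        simp only [Nat.add_sub_cancel]
    _ ≤ n ! := by
        rw [sum_range_inv_succ_mul_succ_succ]
        have : (0 : ℝ) ≤ ((n + 1 : ℕ) + 1 : ℝ)⁻¹ := by positivity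
        nlinarith [(n !).cast_nonneg (α := ℝ)]

theorem Bc_nonneg (hα : α < 2) : ∀ n k, 0 ≤ Bc α n k
  | _, 0 => le_rfl
  | n, 1 => B1_nonneg hα n
  | n, k + 2 => by
    rw [Bc]
    refine mul_nonneg (by positivity) (sum_nonneg fun l _ => ?_)
    have := B1_nonneg hα (n - l)
    have := Bc_nonneg hα l (k + 1)
    positivity

theorem Bc_le (hα₁ : 1 ≤ α) (hα₂ : α < 2) : ∀ n k, Bc α n k ≤ n ! / k !
  | n, 0 => by rw [Bc]; positivity
  | n, 1 => by
    refine (B1_le hα₁ hα₂ n).trans ?_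
    rw [factorial_one, Nat.cast_one]
    have : (1 : ℝ) ≤ (n + 1) * (n + 2) := by nlinarith [n.cast_nonneg (α := ℝ)]
    gcongr
  | n, k + 2 => by
    have hsub : Icc (k + 1) (n - 1) ⊆ range (n + 1) := fun l hl => by
      simp only [mem_Icc, mem_range] at hl ⊢; omega
    calc Bc α n (k + 2)
        = 1 / (k + 2 : ℝ) * ∑ l ∈ Icc (k + 1) (n - 1),
            (n.choose l : ℝ) * B1 α (n - l) * Bc α l (k + 1) := by rw [Bc]
      _ ≤ 1 / (k + 2 : ℝ) * ∑ l ∈ Icc (k + 1) (n - 1),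
            (n.choose l : ℝ) * B1 α (n - l) * (l ! / (k + 1)!) := by
          gcongr with l
          · have := B1_nonneg hα₂ (n - l); positivity
          · exact Bc_le hα₁ hα₂ l (k + 1)
      _ = (∑ l ∈ Icc (k + 1) (n - 1), (n.choose l : ℝ) * B1 α (n - l) * l !) / (k + 2)! := by
          simp only [mul_div_assoc', ← sum_div]
          rw [factorial_succ (k + 1)]
          push_cast
          field_simp
          ring
      _ ≤ n ! / (k + 2)! := by
          gcongr
          exact sum_choose_mul_B1_mul_factorial_le hα₁ hα₂ hsub

theorem cC_of_ne_zero {n : ℕ} (hn : n ≠ 0) :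
    cC α n = 1 / ((2 * n)! * √π) * (2 / α) ^ n *
      ∑ k ∈ Icc 1 (2 * n), Bc α (2 * n) k * Gamma (n + k + 1 / 2) * (2 * (α - 1)) ^ k := by
  obtain ⟨p, rfl⟩ := Nat.exists_eq_succ_of_ne_zero hn
  rw [cC]
  push_cast
  rfl

theorem cC_summand_nonneg (hα₁ : 1 ≤ α) (hα₂ : α < 2) (n k : ℕ) :
    0 ≤ Bc α (2 * n) k * Gamma (n + k + 1 / 2) * (2 * (α - 1)) ^ k := by
  have := Bc_nonneg hα₂ (2 * n) k
  have := Gamma_pos_of_pos (by positivity : (0 : ℝ) < n + k + 1 / 2)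
  have : 0 ≤ 2 * (α - 1) := by linarith
  positivity

theorem cC_summand_le (hα₁ : 1 ≤ α) (hα₂ : α < 2) {n k : ℕ} (hk : k ∈ Icc 1 (2 * n)) :
    Bc α (2 * n) k * Gamma (n + k + 1 / 2) * (2 * (α - 1)) ^ k ≤ (2 * n)! * (12 * n) ^ n := by
  obtain ⟨hk₁, hk₂⟩ := mem_Icc.mp hk
  have hΓ : Gamma (n + k + 1 / 2) ≤ k ! * (3 * n) ^ n := by
    calc Gamma (n + k + 1 / 2) ≤ Gamma ((n + k : ℕ) + 1) := by
          apply Gamma_le_Gamma_of_two_le <;> push_cast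
          · have : (1 : ℝ) ≤ n := by exact_mod_cast (show 1 ≤ n by omega)
            have : (1 : ℝ) ≤ k := by exact_mod_cast hk₁
            linarith
          · linarith
      _ ≤ k ! * ((n + k : ℕ) : ℝ) ^ n := by
          rw [Gamma_nat_eq_factorial]; exact_mod_cast Nat.factorial_add_le_factorial_mul_pow n k
      _ ≤ k ! * (3 * n) ^ n := by
          gcongr; push_cast
          have : (k : ℝ) ≤ 2 * n := by exact_mod_cast hk₂
          linarith
  have hpow : (2 * (α - 1)) ^ k ≤ (4 : ℝ) ^ n :=
    calc (2 * (α - 1)) ^ k ≤ (2 : ℝ) ^ (2 * n) :=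
          (pow_le_pow_left₀ (by linarith) (by linarith) k).trans (pow_le_pow_right₀ one_le_two hk₂)
      _ = 4 ^ n := by rw [pow_mul]; norm_num
  calc Bc α (2 * n) k * Gamma (n + k + 1 / 2) * (2 * (α - 1)) ^ k
      ≤ (2 * n)! / k ! * (k ! * (3 * n) ^ n) * 4 ^ n := by
        have := Bc_nonneg hα₂ (2 * n) k
        gcongr
        exact Bc_le hα₁ hα₂ _ _
    _ = (2 * n)! * (12 * n) ^ n := by
        field_simp
        rw [← mul_pow]
        ring

theorem le_cC_summand_one (hα₁ : 1 ≤ α) (hα₂ : α < 2) (p : ℕ) :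
    (2 - α) * (2 * p)! / ((2 * p + 3) * (2 * p + 4)) * (p + 1)! * (2 * (α - 1)) ^ 1 ≤
      Bc α (2 * (p + 1)) 1 * Gamma ((p + 1 : ℕ) + (1 : ℕ) + 1 / 2) * (2 * (α - 1)) ^ 1 := by
  have hB1 : (2 - α) * (2 * p)! / ((2 * p + 3) * (2 * p + 4)) ≤ Bc α (2 * (p + 1)) 1 := by
    rw [Bc, mul_add_one]
    exact_mod_cast mul_factorial_div_le_B1 hα₂ (2 * p)
  have hΓ : ((p + 1)! : ℝ) ≤ Gamma ((p + 1 : ℕ) + (1 : ℕ) + 1 / 2) := by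
    rw [← Gamma_nat_eq_factorial]
    apply Gamma_le_Gamma_of_two_le <;> push_cast <;> linarith [p.cast_nonneg (α := ℝ)]
  have := Bc_nonneg hα₂ (2 * (p + 1)) 1
  have : 0 ≤ 2 * (α - 1) := by linarith
  gcongr

theorem le_cC (hα₁ : 1 ≤ α) (hα₂ : α < 2) {n : ℕ} (hn : n ≠ 0) :
    (α - 1) * (2 - α) / (128 * √π) * (2 / α) ^ n * n ! / n ^ 4 ≤ cC α n := by
  have hsummand := single_le_sum (fun k _ => cC_summand_nonneg hα₁ hα₂ n k)
    (left_mem_Icc.2 (by omega) : 1 ∈ Icc 1 (2 * n))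
  rw [cC_of_ne_zero hn]
  obtain ⟨p, rfl⟩ : ∃ p, n = p + 1 := ⟨n - 1, by omega⟩
  have hfac :
      ((2 * (p + 1))! : ℝ) * ((2 * p + 3) * (2 * p + 4)) ≤ (4 * (p + 1)) ^ 4 * (2 * p)! := by
    have h : (((2 * p + 2)! * ((2 * p + 3) * (2 * p + 4)) : ℕ) : ℝ) ≤
        ((2 * (2 * p) + 4) ^ 4 * (2 * p)! : ℕ) := mod_cast Nat.factorial_add_two_mul_le (2 * p)
    rw [mul_add_one]
    push_cast at h ⊢
    linear_combination h
  have hratio : 1 / (128 * ((p + 1 : ℕ) : ℝ) ^ 4) ≤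
      2 * (2 * p)! / ((2 * (p + 1))! * ((2 * p + 3) * (2 * p + 4))) := by
    rw [div_le_div_iff₀ (by positivity) (by positivity)]
    push_cast
    linarith
  have hc : 0 ≤ (α - 1) * (2 - α) * (2 / α) ^ (p + 1) * (p + 1)! / √π := by
    have : 0 ≤ (α - 1) * (2 - α) := mul_nonneg (by linarith) (by linarith)
    have : 0 < α := by linarith
    positivity
  calc _ = (α - 1) * (2 - α) * (2 / α) ^ (p + 1) * (p + 1)! / √π *
        (1 / (128 * ((p + 1 : ℕ) : ℝ) ^ 4)) := by ring
    _ ≤ (α - 1) * (2 - α) * (2 / α) ^ (p + 1) * (p + 1)! / √π *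
        (2 * (2 * p)! / ((2 * (p + 1))! * ((2 * p + 3) * (2 * p + 4)))) :=
        mul_le_mul_of_nonneg_left hratio hc
    _ = 1 / ((2 * (p + 1))! * √π) * (2 / α) ^ (p + 1) *
        ((2 - α) * (2 * p)! / ((2 * p + 3) * (2 * p + 4)) * (p + 1)! * (2 * (α - 1)) ^ 1) := by
        field_simp
    _ ≤ _ := by gcongr; exact (le_cC_summand_one hα₁ hα₂ p).trans hsummand

theorem cC_le (hα₁ : 1 ≤ α) (hα₂ : α < 2) {n : ℕ} (hn : n ≠ 0) : cC α n ≤ (96 * n / α) ^ n := by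
  have hsum := sum_le_card_nsmul _ _ _ fun k hk => cC_summand_le hα₁ hα₂ (n := n) (k := k) hk
  rw [Nat.card_Icc, Nat.add_sub_cancel, nsmul_eq_mul] at hsum
  have h2n : (2 * n : ℝ) ≤ 4 ^ n := by
    have := one_add_mul_le_pow (by norm_num : (-2 : ℝ) ≤ 3) n
    norm_num at this
    linarith
  have hπ : 1 ≤ √π := one_le_sqrt.mpr (by linarith [pi_gt_three])
  rw [cC_of_ne_zero hn]
  calc _ ≤ 1 / ((2 * n)! * √π) * (2 / α) ^ n * ((2 * n : ℕ) * ((2 * n)! * (12 * n) ^ n)) := by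
        gcongr
    _ = 2 * n / √π * ((2 / α) ^ n * (12 * n) ^ n) := by
        push_cast
        field_simp
    _ ≤ 4 ^ n * ((2 / α) ^ n * (12 * n) ^ n) := by
        gcongr
        exact (div_le_self (by positivity) hπ).trans h2n
    _ = (96 * n / α) ^ n := by
        rw [← mul_pow, ← mul_pow]
        congr 1
        ring

theorem eventually_pow_le_cC (hα₁ : 1 < α) (hα₂ : α < 2) :
    ∀ᶠ n : ℕ in atTop, (n / (α * exp 1)) ^ n ≤ cC α n := by
  set C := (α - 1) * (2 - α) / (128 * √π)
  have hC : 0 < C := by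
    have : 0 < (α - 1) * (2 - α) := mul_pos (by linarith) (by linarith)
    positivity
  have hpoly : ∀ᶠ n : ℕ in atTop, (n : ℝ) ^ 4 / 2 ^ n ≤ C :=
    (tendsto_pow_const_div_const_pow_of_one_lt 4 one_lt_two).eventually (ge_mem_nhds hC)
  filter_upwards [hpoly, eventually_ne_atTop 0] with n hpoly hn
  have hα : 0 < α := by linarith
  have htwo : 1 / (2 : ℝ) ^ n ≤ C / n ^ 4 := by
    rw [div_le_div_iff₀ (by positivity) (by positivity)]
    rw [div_le_iff₀ (by positivity)] at hpoly
    linarith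
  have hfac : (n : ℝ) ^ n / exp 1 ^ n ≤ n ! := by
    rw [div_le_iff₀ (by positivity), ← exp_nat_mul, mul_one, mul_comm,
      ← div_le_iff₀ (by positivity)]
    exact pow_div_factorial_le_exp _ n.cast_nonneg n
  refine le_trans ?_ (le_cC hα₁.le hα₂ hn)
  calc (n / (α * exp 1)) ^ n = (2 / α) ^ n * ((n : ℝ) ^ n / exp 1 ^ n) * (1 / 2 ^ n) := by
        rw [← div_pow, one_div, ← inv_pow, ← mul_pow, ← mul_pow]
        congr 1
        field_simp
    _ ≤ (2 / α) ^ n * n ! * (C / n ^ 4) := by gcongr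
    _ = C * (2 / α) ^ n * n ! / n ^ 4 := by ring

end Coefficients

/-- For `1 < α < 2` there exist constants `0 < κ₁ ≤ κ₂ < ∞` with
`κ₁ n ≤ (c_n^{(α)})^{1/n} ≤ κ₂ n` for all sufficiently large `n`. -/
theorem cC_root_growth (α : ℝ) (hα₁ : 1 < α) (hα₂ : α < 2) :
    ∃ κ₁ κ₂ : ℝ, 0 < κ₁ ∧ κ₁ ≤ κ₂ ∧
      ∀ᶠ n : ℕ in atTop,
        κ₁ * n ≤ (cC α n) ^ (1 / (n : ℝ)) ∧ (cC α n) ^ (1 / (n : ℝ)) ≤ κ₂ * n := by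
  have hα : 0 < α := by linarith
  refine ⟨1 / (α * exp 1), 96 / α, by positivity, ?_, ?_⟩
  · rw [div_le_div_iff₀ (by positivity) hα]
    nlinarith [exp_one_gt_d9]
  filter_upwards [eventually_pow_le_cC hα₁ hα₂, eventually_ne_atTop 0] with n hlow hn
  have hpos : 0 ≤ cC α n := (pow_nonneg (by positivity) n).trans hlow
  constructor
  · rw [one_div_mul_eq_div]
    exact le_rpow_one_div_of_pow_le hn (by positivity) hlow
  · rw [div_mul_eq_mul_div]
    exact rpow_one_div_le_of_le_pow hn hpos (by positivity) (cC_le hα₁.le hα₂ hn)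
end

section
/- For every real λ, the Wronskian-type combination satisfies Ψ_2′(λ) Φ_2(λ) − Φ_2′(λ) Ψ_2(λ) = 1/(3π) − (1/π) ∫_0^λ Φ_2(x) dx. -/
/-!
Both functions are `π⁻¹` times power series whose coefficients obey the Airy recurrence
`c (n + 3) = c n / ((n + 2) (n + 3))`, a consequence of `Γ (s + 1) = s Γ (s)` and of the
antiperiodicity of `sin` and `cos`. Hence `Φ₂'' = x Φ₂` and `Ψ₂'' = x Ψ₂ - 1/π`, the constant
coming from the coefficient of `x²` in `Ψ₂`. The Wronskian `W = Ψ₂' Φ₂ - Φ₂' Ψ₂` then satisfies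
`W' = -Φ₂ / π`, and `W 0 = 1 / (3π)` by the reflection formula `Γ(1/3) Γ(2/3) = π / sin (π/3)`.
-/

open scoped Real BigOperators
open MeasureTheory Filter Asymptotics

/-- The M-Wright function `Φ_α` as a real power series. -/
noncomputable def Phi (α : ℝ) (x : ℝ) : ℝ :=
  (1 / Real.pi) * ∑' n : ℕ,
    ((-1 : ℝ) ^ n / n.factorial) * Real.Gamma ((1 + n) / (1 + α)) *
      Real.sin (Real.pi * (1 + n) / (α + 1)) *
      (1 + α) ^ (((n : ℝ) - α) / (1 + α)) * x ^ n

/-- The companion function `Ψ_α` (with cosine in place of sine). -/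
noncomputable def Psi (α : ℝ) (x : ℝ) : ℝ :=
  (1 / Real.pi) * ∑' n : ℕ,
    ((-1 : ℝ) ^ n / n.factorial) * Real.Gamma ((1 + n) / (1 + α)) *
      Real.cos (Real.pi * (1 + n) / (α + 1)) *
      (1 + α) ^ (((n : ℝ) - α) / (1 + α)) * x ^ n

open Topology

/-- Apply the ordinary ratio test on each residue class mod `k`. -/
theorem summable_of_ratio_norm_eventually_le_step {α : Type*} [SeminormedAddCommGroup α]
    [CompleteSpace α] {f : ℕ → α} {k : ℕ} [NeZero k] {r : ℝ} (hr : r < 1)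
    (h : ∀ᶠ n in atTop, ‖f (n + k)‖ ≤ r * ‖f n‖) : Summable f := by
  refine Summable.of_norm ?_
  rw [← ((Equiv.prodComm (Fin k) ℕ).trans (Nat.divModEquiv k).symm).summable_iff]
  refine (summable_prod_of_nonneg fun _ ↦ norm_nonneg _).2 ⟨fun i ↦ ?_, .of_finite⟩
  have hq : Tendsto (fun q ↦ q * k + i) atTop atTop :=
    tendsto_atTop_mono (fun q ↦ le_add_right (Nat.le_mul_of_pos_right q (NeZero.pos k))) tendsto_id
  refine summable_of_ratio_norm_eventually_le hr ?_
  filter_upwards [hq.eventually h] with q hq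
  simpa [add_mul, add_right_comm] using hq

theorem succ_mul_pow_le_add_one_pow {r : ℝ} (hr : 0 ≤ r) (n : ℕ) :
    ((n : ℝ) + 1) * r ^ n ≤ (r + 1) ^ (n + 1) := by
  rw [add_pow]
  have := Finset.single_le_sum (f := fun m ↦ r ^ m * 1 ^ (n + 1 - m) * ((n + 1).choose m : ℝ))
    (fun m _ ↦ by positivity) (Finset.mem_range.2 (by omega : n < n + 2))
  simpa [Nat.choose_succ_self_right, mul_comm] using this

section PowerSeries

variable {𝕜 : Type*} [RCLike 𝕜]

noncomputable def powerSum (a : ℕ → 𝕜) (x : 𝕜) : 𝕜 := ∑' n, a n * x ^ n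

def derivCoeff (a : ℕ → 𝕜) (n : ℕ) : 𝕜 := (n + 1) * a (n + 1)

def IsEntireCoeff (a : ℕ → 𝕜) : Prop := ∀ r : ℝ, 0 ≤ r → Summable fun n ↦ ‖a n‖ * r ^ n

theorem isEntireCoeff_of_norm_le_step {a : ℕ → 𝕜} {k : ℕ} [NeZero k] {ε : ℕ → ℝ}
    (hε : Tendsto ε atTop (𝓝 0)) (h : ∀ n, ‖a (n + k)‖ ≤ ε n * ‖a n‖) : IsEntireCoeff a := by
  intro r hr
  have hsmall : ∀ᶠ n in atTop, ε n * r ^ k < 1 / 2 := by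
    refine (hε.mul_const (r ^ k)).eventually (gt_mem_nhds ?_)
    norm_num
  refine summable_of_ratio_norm_eventually_le_step (k := k) (by norm_num : (1 / 2 : ℝ) < 1) ?_
  filter_upwards [hsmall] with n hn
  have h0 : 0 ≤ ‖a n‖ * r ^ n := by positivity
  rw [Real.norm_of_nonneg h0, Real.norm_of_nonneg (by positivity), pow_add]
  calc ‖a (n + k)‖ * (r ^ n * r ^ k) ≤ ε n * ‖a n‖ * (r ^ n * r ^ k) := by gcongr; exact h n
    _ = (ε n * r ^ k) * (‖a n‖ * r ^ n) := by ring
    _ ≤ 1 / 2 * (‖a n‖ * r ^ n) := by gcongr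

theorem norm_derivCoeff (a : ℕ → 𝕜) (n : ℕ) : ‖derivCoeff a n‖ = (n + 1) * ‖a (n + 1)‖ := by
  rw [derivCoeff, norm_mul, ← Nat.cast_add_one, RCLike.norm_natCast, Nat.cast_add_one]

namespace IsEntireCoeff

variable {a : ℕ → 𝕜}

theorem summable (h : IsEntireCoeff a) (x : 𝕜) : Summable fun n ↦ a n * x ^ n :=
  .of_norm <| by simpa [norm_mul, norm_pow] using h ‖x‖ (norm_nonneg x)

theorem derivCoeff (h : IsEntireCoeff a) : IsEntireCoeff (derivCoeff a) := by
  intro r hr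
  refine .of_nonneg_of_le (fun n ↦ by positivity) (fun n ↦ ?_)
    ((summable_nat_add_iff 1).2 (h (r + 1) (by positivity)))
  calc ‖_root_.derivCoeff a n‖ * r ^ n = ‖a (n + 1)‖ * ((n + 1) * r ^ n) := by
        rw [norm_derivCoeff]; ring
    _ ≤ ‖a (n + 1)‖ * (r + 1) ^ (n + 1) := by gcongr; exact succ_mul_pow_le_add_one_pow hr n

theorem hasDerivAt (h : IsEntireCoeff a) (x : 𝕜) :
    HasDerivAt (powerSum a) (powerSum (_root_.derivCoeff a) x) x := by
  set R := ‖x‖ + 1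
  have hu : Summable fun n ↦ ‖a n‖ * n * R ^ (n - 1) := by
    refine (summable_nat_add_iff 1).1 ?_
    refine (h.derivCoeff R (by positivity)).congr fun n ↦ ?_
    rw [norm_derivCoeff, Nat.add_sub_cancel]; push_cast; ring
  have hzero : Summable fun n ↦ a n * (0 : 𝕜) ^ n := by
    refine summable_of_ne_finset_zero (s := {0}) fun n hn ↦ ?_
    simp [zero_pow (Finset.notMem_singleton.1 hn)]
  have key := hasDerivAt_tsum_of_isPreconnected (g := fun n y ↦ a n * y ^ n)
    (g' := fun n y ↦ a n * (n * y ^ (n - 1))) hu Metric.isOpen_ball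
    (convex_ball (0 : 𝕜) R).isPreconnected
    (fun n y _ ↦ (hasDerivAt_pow n y).const_mul (a n)) (fun n y hy ↦ ?_)
    (Metric.mem_ball_self (by positivity)) hzero
    (by simp [R] : x ∈ Metric.ball (0 : 𝕜) R)
  · refine key.congr_deriv ?_
    rw [tsum_eq_zero_add' ?_]
    · simp only [powerSum, _root_.derivCoeff, Nat.cast_zero, zero_mul, mul_zero, zero_add,
        Nat.cast_add_one, Nat.add_sub_cancel]
      exact tsum_congr fun n ↦ by ring
    · refine (h.derivCoeff.summable x).congr fun n ↦ ?_
      simp only [_root_.derivCoeff, Nat.cast_add_one, Nat.add_sub_cancel]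
      ring
  · rw [mem_ball_zero_iff] at hy
    rw [norm_mul, norm_mul, norm_pow, RCLike.norm_natCast, mul_assoc]
    gcongr

/-- The recurrence `hairy` says that `y = powerSum a` solves `y'' = x y + 2 a₂`. -/
theorem powerSum_derivCoeff_derivCoeff_of_airy (h : IsEntireCoeff a)
    (hairy : ∀ n, _root_.derivCoeff (_root_.derivCoeff a) (n + 1) = a n) (x : 𝕜) :
    powerSum (_root_.derivCoeff (_root_.derivCoeff a)) x = 2 * a 2 + x * powerSum a x := by
  have hshift : ∀ n, _root_.derivCoeff (_root_.derivCoeff a) (n + 1) * x ^ (n + 1) =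
      x * (a n * x ^ n) := fun n ↦ by rw [hairy, pow_succ]; ring
  rw [powerSum, tsum_eq_zero_add' ?_, tsum_congr hshift, tsum_mul_left, powerSum]
  · simp only [_root_.derivCoeff]; norm_num
  · simpa only [hshift] using (h.summable x).mul_left x

end IsEntireCoeff

theorem hasDerivAt_airy_wronskian {a b : ℕ → 𝕜} (ha : IsEntireCoeff a) (hb : IsEntireCoeff b)
    (ha' : ∀ n, derivCoeff (derivCoeff a) (n + 1) = a n)
    (hb' : ∀ n, derivCoeff (derivCoeff b) (n + 1) = b n) (x : 𝕜) :
    HasDerivAt (fun y ↦ powerSum (derivCoeff b) y * powerSum a y -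
        powerSum (derivCoeff a) y * powerSum b y)
      (2 * b 2 * powerSum a x - 2 * a 2 * powerSum b x) x := by
  refine (((hb.derivCoeff.hasDerivAt x).fun_mul (ha.hasDerivAt x)).fun_sub
    ((ha.derivCoeff.hasDerivAt x).fun_mul (hb.hasDerivAt x))).congr_deriv ?_
  rw [ha.powerSum_derivCoeff_derivCoeff_of_airy ha', hb.powerSum_derivCoeff_derivCoeff_of_airy hb']
  ring

theorem powerSum_zero (a : ℕ → 𝕜) : powerSum a 0 = a 0 := by
  rw [powerSum, tsum_eq_single 0 fun n hn ↦ by simp [zero_pow hn]]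
  simp

end PowerSeries

noncomputable def wrightCoeff (g : ℝ → ℝ) (n : ℕ) : ℝ :=
  (-1) ^ n / n.factorial * Real.Gamma ((1 + n) / 3) * g (π * (1 + n) / 3) * 3 ^ (((n : ℝ) - 2) / 3)

theorem Phi_two_eq : Phi 2 = fun x ↦ 1 / π * powerSum (wrightCoeff Real.sin) x := by
  ext x
  simp only [Phi, powerSum, wrightCoeff]
  norm_num

theorem Psi_two_eq : Psi 2 = fun x ↦ 1 / π * powerSum (wrightCoeff Real.cos) x := by
  ext x
  simp only [Psi, powerSum, wrightCoeff]
  norm_num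

section WrightCoeff

variable {g : ℝ → ℝ}

theorem wrightCoeff_add_three (hg : Function.Antiperiodic g π) (n : ℕ) :
    wrightCoeff g (n + 3) = wrightCoeff g n / ((n + 2) * (n + 3)) := by
  have hΓ : Real.Gamma ((1 + (n + 3 : ℕ)) / 3) = (1 + n) / 3 * Real.Gamma ((1 + n) / 3) := by
    rw [← Real.Gamma_add_one (by positivity)]; push_cast; ring_nf
  have hg3 : g (π * (1 + (n + 3 : ℕ)) / 3) = -g (π * (1 + n) / 3) := by
    rw [← hg]; push_cast; ring_nf
  have h3 : (3 : ℝ) ^ ((((n + 3 : ℕ) : ℝ) - 2) / 3) = 3 * 3 ^ (((n : ℝ) - 2) / 3) := by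
    rw [show (((n + 3 : ℕ) : ℝ) - 2) / 3 = 1 + ((n : ℝ) - 2) / 3 by push_cast; ring,
      Real.rpow_add (by norm_num), Real.rpow_one]
  simp only [wrightCoeff, hΓ, hg3, h3, Nat.factorial_succ, pow_succ]
  push_cast
  field_simp
  ring

theorem derivCoeff_derivCoeff_wrightCoeff (hg : Function.Antiperiodic g π) (n : ℕ) :
    derivCoeff (derivCoeff (wrightCoeff g)) (n + 1) = wrightCoeff g n := by
  simp only [derivCoeff, wrightCoeff_add_three hg]
  push_cast
  field_simp
  ring

theorem isEntireCoeff_wrightCoeff (hg : Function.Antiperiodic g π) :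
    IsEntireCoeff (wrightCoeff g) := by
  refine isEntireCoeff_of_norm_le_step (k := 3) tendsto_one_div_add_atTop_nhds_zero_nat
    fun n ↦ ?_
  have hpos : (0 : ℝ) ≤ (n + 2) * (n + 3) := by positivity
  rw [wrightCoeff_add_three hg, norm_div, Real.norm_of_nonneg hpos, div_eq_mul_one_div, mul_comm]
  gcongr
  nlinarith

end WrightCoeff

theorem wrightCoeff_sin_two : wrightCoeff Real.sin 2 = 0 := by
  simp [wrightCoeff, show π * (1 + 2) / 3 = π by ring]

theorem wrightCoeff_cos_two : wrightCoeff Real.cos 2 = -1 / 2 := by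
  norm_num [wrightCoeff, show π * (1 + 2) / 3 = π by ring, Nat.factorial]

theorem wrightCoeff_wronskian_zero :
    wrightCoeff Real.cos 1 * wrightCoeff Real.sin 0 -
      wrightCoeff Real.sin 1 * wrightCoeff Real.cos 0 = π / 3 := by
  have hrefl : Real.Gamma (1 / 3) * Real.Gamma (2 / 3) * (√3 / 2) = π := by
    have := Real.Gamma_mul_Gamma_one_sub (1 / 3)
    rw [show (1 : ℝ) - 1 / 3 = 2 / 3 by norm_num, show π * (1 / 3) = π / 3 by ring,
      Real.sin_pi_div_three] at this
    rw [this, div_mul_cancel₀]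
    positivity
  have h3 : (3 : ℝ) ^ (-(1 / 3) : ℝ) * 3 ^ (-(2 / 3) : ℝ) = 1 / 3 := by
    rw [← Real.rpow_add (by norm_num)]; norm_num
  have hsin : Real.sin (π * 2 / 3) = √3 / 2 := by
    rw [← Real.sin_pi_div_three, ← Real.sin_pi_sub]; ring_nf
  have hcos : Real.cos (π * 2 / 3) = -(1 / 2) := by
    rw [← Real.cos_pi_div_three, ← Real.cos_pi_sub]; ring_nf
  simp only [wrightCoeff]
  norm_num [hsin, hcos]
  linear_combination (3 : ℝ) ^ (-(1 / 3) : ℝ) * 3 ^ (-(2 / 3) : ℝ) * hrefl + π * h3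

/-- For every real `λ`,
`Ψ₂'(λ) Φ₂(λ) − Φ₂'(λ) Ψ₂(λ) = 1/(3π) − (1/π) ∫_0^λ Φ₂(x) dx`. -/
theorem wronskian_phi_psi_two (l : ℝ) :
    deriv (Psi 2) l * Phi 2 l - deriv (Phi 2) l * Psi 2 l =
      1 / (3 * Real.pi) - (1 / Real.pi) * ∫ x in (0 : ℝ)..l, Phi 2 x := by
  rw [Phi_two_eq, Psi_two_eq]
  set a := wrightCoeff Real.sin
  set b := wrightCoeff Real.cos
  have ha : IsEntireCoeff a := isEntireCoeff_wrightCoeff Real.sin_antiperiodic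
  have hb : IsEntireCoeff b := isEntireCoeff_wrightCoeff Real.cos_antiperiodic
  have hW (x : ℝ) : HasDerivAt (fun y ↦ powerSum (derivCoeff b) y * powerSum a y -
      powerSum (derivCoeff a) y * powerSum b y) (-powerSum a x) x := by
    refine (hasDerivAt_airy_wronskian ha hb
      (derivCoeff_derivCoeff_wrightCoeff Real.sin_antiperiodic)
      (derivCoeff_derivCoeff_wrightCoeff Real.cos_antiperiodic) x).congr_deriv ?_
    rw [show a 2 = 0 from wrightCoeff_sin_two, show b 2 = -1 / 2 from wrightCoeff_cos_two]
    ring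
  have hcont : Continuous (powerSum a) :=
    continuous_iff_continuousAt.2 fun x ↦ (ha.hasDerivAt x).continuousAt
  have hFTC := intervalIntegral.integral_eq_sub_of_hasDerivAt (fun x _ ↦ hW x)
    (hcont.neg.intervalIntegrable 0 l)
  have hW0 : b 1 * a 0 - a 1 * b 0 = π / 3 := wrightCoeff_wronskian_zero
  simp only [powerSum_zero, derivCoeff, Nat.cast_zero, zero_add, one_mul, hW0,
    intervalIntegral.integral_neg] at hFTC
  rw [((hb.hasDerivAt l).const_mul (1 / π)).deriv, ((ha.hasDerivAt l).const_mul (1 / π)).deriv,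
    intervalIntegral.integral_const_mul]
  field_simp
  linear_combination (-3) * hFTC
end

section
/- Let α be a real number with 1 < α < 2. For every complex number y and every complex number w with |w| < 1, the series Σ_{n=1}^∞ B_{n,1} w^n/n! converges absolutely and the exponential generating identity exp( y Σ_{n=1}^∞ B_{n,1} w^n/n! ) = 1 + Σ_{n=1}^∞ (w^n/n!) Σ_{k=1}^n y^k B_{n,k} holds, the double series on the right converging absolutely. -/
open scoped Real BigOperators
open MeasureTheory Filter Asymptotics

/-!
Write `G_k(w) = ∑_{n ≥ 1} B_{n,k} wⁿ / n!`. The recursion defining `B_{n,k+1}` says exactly that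
`(k + 1) G_{k+1} = G_k G_1` as a Cauchy product of exponential generating series, hence
`G_k = G_1 ^ k / k!`. Since `0 ≤ B_{n,1} ≤ n!`, `G_1` converges absolutely for `|w| < 1`, and the
same recursion bounds `∑_n |B_{n,k} wⁿ / n!|` by `(∑_n |B_{n,1} wⁿ / n!|) ^ k / k!`. So the double
series `∑_k ∑_n y^k B_{n,k} wⁿ / n!` converges absolutely: summed by rows it is `exp (y G_1) - 1`,
summed by columns it is the right-hand side.
-/

open Finset NormedSpace
open scoped Nat

lemma ascPochhammer_eval_le_of_le {S : Type*} [CommSemiring S] [PartialOrder S]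
    [IsStrictOrderedRing S] {x y : S} (hx : 0 < x) (hxy : x ≤ y) (m : ℕ) :
    (ascPochhammer S m).eval x ≤ (ascPochhammer S m).eval y := by
  induction m with
  | zero => simp
  | succ m ih =>
    simp only [ascPochhammer_succ_eval]
    exact mul_le_mul ih (by gcongr) (by positivity) (ascPochhammer_pos m y (hx.trans_le hxy)).le

lemma choose_mul_pow_div_factorial {𝕜 : Type*} [Field 𝕜] [CharZero 𝕜] (w : 𝕜) {n l : ℕ}
    (hl : l ≤ n) :
    (n.choose l : 𝕜) * w ^ n / n ! = w ^ l / l ! * (w ^ (n - l) / (n - l)!) := by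
  rw [Nat.cast_choose 𝕜 hl, div_mul_div_comm, ← pow_add, Nat.add_sub_cancel' hl]
  field_simp [Nat.factorial_ne_zero]

section Coefficients

variable {α : ℝ}

lemma B1_pos (hα : α < 2) (n : ℕ) : 0 < B1 α n :=
  div_pos (ascPochhammer_pos _ _ (by linarith)) (by positivity)

lemma B1_le_factorial (hα₁ : 1 ≤ α) (hα₂ : α < 2) (n : ℕ) : B1 α n ≤ n ! :=
  calc B1 α n ≤ (ascPochhammer ℝ (n - 1)).eval (2 - α) :=
        div_le_self (ascPochhammer_pos _ _ (by linarith)).le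
          (by nlinarith [n.cast_nonneg (α := ℝ)])
    _ ≤ (ascPochhammer ℝ (n - 1)).eval 1 :=
        ascPochhammer_eval_le_of_le (by linarith) (by linarith) _
    _ = (n - 1)! := ascPochhammer_eval_one ℝ _
    _ ≤ n ! := by exact_mod_cast Nat.factorial_le (Nat.sub_le n 1)

lemma Bc_one (n : ℕ) : Bc α n 1 = B1 α n := by
  rw [Bc]

lemma Bc_eq_zero_of_lt {n k : ℕ} (hk : 2 ≤ k) (hn : n < k) : Bc α n k = 0 := by
  obtain ⟨k, rfl⟩ := Nat.exists_eq_add_of_le' hk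
  rw [Bc, Icc_eq_empty (by omega), sum_empty, mul_zero]

lemma Bc_add_two_eq_sum_Ioo (n k : ℕ) :
    Bc α n (k + 2) =
      (∑ l ∈ Ioo 0 n, (n.choose l : ℝ) * B1 α (n - l) * Bc α l (k + 1)) / (k + 2) := by
  rw [Bc, one_div_mul_eq_div]
  congr 1
  refine sum_subset (fun l hl => by simp only [mem_Icc, mem_Ioo] at hl ⊢; omega)
    fun l hl hl' => ?_
  simp only [mem_Icc, mem_Ioo] at hl hl'
  rw [Bc_eq_zero_of_lt (by omega) (by omega), mul_zero]

end Coefficients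

section DividedPowers

variable {𝕜 : Type*} [RCLike 𝕜]

def IsDividedPowerSeq (f : ℕ → ℕ → 𝕜) : Prop :=
  ∀ k n, f (k + 2) n = (∑ p ∈ antidiagonal n, f (k + 1) p.1 * f 1 p.2) / (k + 2)

namespace IsDividedPowerSeq

variable {f : ℕ → ℕ → 𝕜}

lemma summable_norm_and_tsum_norm_le (hf : IsDividedPowerSeq f) (h1 : Summable (‖f 1 ·‖))
    (k : ℕ) :
    Summable (‖f (k + 1) ·‖) ∧
      ∑' n, ‖f (k + 1) n‖ ≤ (∑' n, ‖f 1 n‖) ^ (k + 1) / (k + 1)! := by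
  induction k with
  | zero => simpa using h1
  | succ k ih =>
    obtain ⟨hk, hk_le⟩ := ih
    let c : ℕ → ℝ := fun n => ∑ p ∈ antidiagonal n, ‖f (k + 1) p.1‖ * ‖f 1 p.2‖
    have hc : Summable c := summable_sum_mul_antidiagonal_of_summable_mul
      (f := (‖f (k + 1) ·‖)) (g := (‖f 1 ·‖))
      (hk.mul_of_nonneg h1 (fun n => norm_nonneg _) fun n => norm_nonneg _)
    have hc_tsum : ∑' n, c n = (∑' n, ‖f (k + 1) n‖) * ∑' n, ‖f 1 n‖ :=
      (tsum_mul_tsum_eq_tsum_sum_antidiagonal_of_summable_norm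
        (f := (‖f (k + 1) ·‖)) (g := (‖f 1 ·‖))
        (by simpa only [norm_norm] using hk) (by simpa only [norm_norm] using h1)).symm
    have hle : ∀ n, ‖f (k + 2) n‖ ≤ c n / (k + 2) := by
      intro n
      have hnorm : ‖(k + 2 : 𝕜)‖ = k + 2 := by
        exact_mod_cast RCLike.norm_natCast (K := 𝕜) (k + 2)
      rw [hf k n, norm_div, hnorm]
      gcongr
      exact (norm_sum_le _ _).trans (sum_le_sum fun p _ => norm_mul_le _ _)
    have hs : Summable (‖f (k + 2) ·‖) :=
      (hc.div_const _).of_nonneg_of_le (fun _ => norm_nonneg _) hle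
    refine ⟨hs, ?_⟩
    calc ∑' n, ‖f (k + 2) n‖ ≤ ∑' n, c n / (k + 2) := hs.tsum_le_tsum hle (hc.div_const _)
      _ = (∑' n, ‖f (k + 1) n‖) * (∑' n, ‖f 1 n‖) / (k + 2) := by
        rw [tsum_div_const, hc_tsum]
      _ ≤ (∑' n, ‖f 1 n‖) ^ (k + 1) / (k + 1)! * (∑' n, ‖f 1 n‖) / (k + 2) := by
        gcongr
      _ = (∑' n, ‖f 1 n‖) ^ (k + 2) / (k + 2)! := by
        rw [Nat.factorial_succ (k + 1)]
        push_cast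
        field_simp
        ring

lemma tsum_eq_pow_div_factorial (hf : IsDividedPowerSeq f) (h1 : Summable (‖f 1 ·‖)) (k : ℕ) :
    ∑' n, f (k + 1) n = (∑' n, f 1 n) ^ (k + 1) / (k + 1)! := by
  induction k with
  | zero => simp
  | succ k ih =>
    have hk := (hf.summable_norm_and_tsum_norm_le h1 k).1
    calc ∑' n, f (k + 2) n
        = (∑' n, ∑ p ∈ antidiagonal n, f (k + 1) p.1 * f 1 p.2) / (k + 2) := by
          simp_rw [hf k, tsum_div_const]
      _ = (∑' n, f (k + 1) n) * (∑' n, f 1 n) / (k + 2) := by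
          rw [tsum_mul_tsum_eq_tsum_sum_antidiagonal_of_summable_norm hk h1]
      _ = (∑' n, f 1 n) ^ (k + 2) / (k + 2)! := by
          rw [ih, Nat.factorial_succ (k + 1)]
          push_cast
          field_simp
          ring

lemma summable_norm_pow_mul (hf : IsDividedPowerSeq f) (h1 : Summable (‖f 1 ·‖)) (y : 𝕜) :
    Summable fun p : ℕ × ℕ => ‖y ^ (p.1 + 1) * f (p.1 + 1) p.2‖ := by
  have hrow := hf.summable_norm_and_tsum_norm_le h1
  refine (summable_prod_of_nonneg fun _ => norm_nonneg _).2 ⟨fun k => ?_, ?_⟩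
  · simpa only [norm_mul] using (hrow k).1.mul_left ‖y ^ (k + 1)‖
  · refine ((summable_nat_add_iff 1).2 (Real.summable_pow_div_factorial
      (‖y‖ * ∑' n, ‖f 1 n‖))).of_nonneg_of_le (fun _ => tsum_nonneg fun _ => norm_nonneg _)
      fun k => ?_
    simp only [norm_mul, norm_pow, tsum_mul_left, mul_pow, mul_div_assoc]
    gcongr
    exact (hrow k).2

lemma exp_mul_tsum_eq_one_add_tsum_tsum (hf : IsDividedPowerSeq f) (h1 : Summable (‖f 1 ·‖))
    (y : 𝕜) :
    exp (y * ∑' n, f 1 n) = 1 + ∑' n, ∑' k, y ^ (k + 1) * f (k + 1) n := by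
  have hF : Summable (Function.uncurry fun k n => y ^ (k + 1) * f (k + 1) n) :=
    (hf.summable_norm_pow_mul h1 y).of_norm
  rw [← (expSeries_div_hasSum_exp (y * ∑' n, f 1 n)).tsum_eq,
    (expSeries_div_summable (y * ∑' n, f 1 n)).tsum_eq_zero_add, hF.tsum_comm]
  congr 1
  · simp
  · refine tsum_congr fun k => ?_
    rw [mul_pow, mul_div_assoc, ← hf.tsum_eq_pow_div_factorial h1, tsum_mul_left]

lemma summable_norm_tsum_pow_mul (hf : IsDividedPowerSeq f) (h1 : Summable (‖f 1 ·‖)) (y : 𝕜) :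
    Summable fun n => ‖∑' k, y ^ (k + 1) * f (k + 1) n‖ := by
  have hF := (hf.summable_norm_pow_mul h1 y).prod_symm
  exact hF.prod.of_nonneg_of_le (fun _ => norm_nonneg _)
    fun n => norm_tsum_le_tsum_norm (hF.prod_factor n)

end IsDividedPowerSeq

end DividedPowers

section BellTerm

variable {𝕜 : Type*} [RCLike 𝕜]

/-- The `n`-th term of `G_k(w)`. The term `n = 0` is set to `0` by hand, since
`Bc α 0 1 = B1 α 0 = 1 / 2`. -/
noncomputable def bellTerm (α : ℝ) (w : 𝕜) (k n : ℕ) : 𝕜 :=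
  if n = 0 then 0 else Bc α n k * w ^ n / n !

variable {α : ℝ}

@[simp]
lemma bellTerm_zero (w : 𝕜) (k : ℕ) : bellTerm α w k 0 = 0 := if_pos rfl

lemma bellTerm_of_ne_zero (w : 𝕜) (k : ℕ) {n : ℕ} (hn : n ≠ 0) :
    bellTerm α w k n = Bc α n k * w ^ n / n ! := if_neg hn

lemma norm_bellTerm_one_le (hα₁ : 1 ≤ α) (hα₂ : α < 2) (w : 𝕜) (n : ℕ) :
    ‖bellTerm α w 1 n‖ ≤ ‖w‖ ^ n := by
  rcases eq_or_ne n 0 with rfl | hn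
  · simp
  rw [bellTerm_of_ne_zero w 1 hn, Bc_one, norm_div, norm_mul, norm_pow, RCLike.norm_ofReal,
    RCLike.norm_natCast, abs_of_pos (B1_pos hα₂ n), div_le_iff₀ (by positivity), mul_comm]
  gcongr
  exact B1_le_factorial hα₁ hα₂ n

lemma summable_norm_bellTerm_one (hα₁ : 1 ≤ α) (hα₂ : α < 2) {w : 𝕜} (hw : ‖w‖ < 1) :
    Summable (‖bellTerm α w 1 ·‖) :=
  (summable_geometric_of_lt_one (norm_nonneg w) hw).of_nonneg_of_le (fun _ => norm_nonneg _)
    (norm_bellTerm_one_le hα₁ hα₂ w)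

lemma isDividedPowerSeq_bellTerm (w : 𝕜) : IsDividedPowerSeq (bellTerm α w) := by
  intro k n
  rcases eq_or_ne n 0 with rfl | hn
  · simp
  have hends : ∀ l ∈ range (n + 1), l ∉ Ioo 0 n →
      bellTerm α w (k + 1) l * bellTerm α w 1 (n - l) = 0 := by
    intro l hl hl'
    simp only [mem_range, mem_Ioo] at hl hl'
    rcases eq_or_ne l 0 with rfl | hl0
    · simp
    · rw [show n - l = 0 by omega, bellTerm_zero, mul_zero]
  have hterm : ∀ l ∈ Ioo 0 n, bellTerm α w (k + 1) l * bellTerm α w 1 (n - l) =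
      ((n.choose l * B1 α (n - l) * Bc α l (k + 1) : ℝ) : 𝕜) * w ^ n / n ! := by
    intro l hl
    simp only [mem_Ioo] at hl
    rw [bellTerm_of_ne_zero w _ hl.1.ne', bellTerm_of_ne_zero w _ (by omega), Bc_one]
    push_cast
    linear_combination (-(B1 α (n - l) * Bc α l (k + 1) : 𝕜)) *
      choose_mul_pow_div_factorial w hl.2.le
  have hsub : Ioo 0 n ⊆ range (n + 1) := fun l hl => by
    simp only [mem_range, mem_Ioo] at hl ⊢
    omega
  rw [Nat.sum_antidiagonal_eq_sum_range_succ_mk, ← sum_subset hsub hends, sum_congr rfl hterm,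
    bellTerm_of_ne_zero w _ hn, Bc_add_two_eq_sum_Ioo, ← sum_div, ← sum_mul]
  push_cast
  ring

lemma tsum_pow_mul_bellTerm_succ (y w : 𝕜) (n : ℕ) :
    ∑' k, y ^ (k + 1) * bellTerm α w (k + 1) (n + 1) =
      w ^ (n + 1) / (n + 1)! * ∑ k ∈ Icc 1 (n + 1), y ^ k * Bc α (n + 1) k := by
  have hvanish : ∀ k ∉ range (n + 1), y ^ (k + 1) * bellTerm α w (k + 1) (n + 1) = 0 := by
    intro k hk
    rw [mem_range, not_lt] at hk
    rw [bellTerm_of_ne_zero w _ (Nat.add_one_ne_zero n), Bc_eq_zero_of_lt (by omega) (by omega)]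
    simp
  rw [tsum_eq_sum hvanish, ← Ico_add_one_right_eq_Icc, sum_Ico_eq_sum_range, Nat.add_sub_cancel,
    mul_sum]
  refine sum_congr rfl fun k _ => ?_
  rw [add_comm 1 k, bellTerm_of_ne_zero w _ (Nat.add_one_ne_zero n)]
  ring

end BellTerm

/-- For `1 < α < 2`, every `y ∈ ℂ` and every `w ∈ ℂ` with `|w| < 1`, the
series `Σ_{n≥1} B_{n,1} w^n/n!` converges absolutely and
`exp(y Σ_{n≥1} B_{n,1} w^n/n!) = 1 + Σ_{n≥1} (w^n/n!) Σ_{k=1}^n y^k B_{n,k}`, the series on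
the right converging absolutely. -/
theorem Bell_generating_identity (α : ℝ) (hα₁ : 1 < α) (hα₂ : α < 2)
    (y w : ℂ) (hw : ‖w‖ < 1) :
    Summable (fun n : ℕ => ‖(Bc α (n + 1) 1 : ℂ) * w ^ (n + 1) / (n + 1).factorial‖) ∧
    Complex.exp (y * ∑' n : ℕ, (Bc α (n + 1) 1 : ℂ) * w ^ (n + 1) / (n + 1).factorial) =
        1 + ∑' n : ℕ,
          (w ^ (n + 1) / (n + 1).factorial) *
            ∑ k ∈ Finset.Icc 1 (n + 1), y ^ k * (Bc α (n + 1) k : ℂ) ∧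
    Summable (fun n : ℕ =>
      ‖(w ^ (n + 1) / (n + 1).factorial : ℂ) *
          ∑ k ∈ Finset.Icc 1 (n + 1), y ^ k * (Bc α (n + 1) k : ℂ)‖) := by
  have h1 := summable_norm_bellTerm_one (α := α) hα₁.le hα₂ hw
  have hf := isDividedPowerSeq_bellTerm (α := α) w
  have hcols := hf.summable_norm_tsum_pow_mul h1 y
  have hG1 : ∑' n, bellTerm α w 1 n =
      ∑' n : ℕ, (Bc α (n + 1) 1 : ℂ) * w ^ (n + 1) / (n + 1)! := by
    rw [h1.of_norm.tsum_eq_zero_add, bellTerm_zero, zero_add]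
    exact tsum_congr fun n => bellTerm_of_ne_zero w 1 (Nat.add_one_ne_zero n)
  have hcol_sums : ∑' n, ∑' k, y ^ (k + 1) * bellTerm α w (k + 1) n = ∑' n : ℕ,
      w ^ (n + 1) / (n + 1)! * ∑ k ∈ Icc 1 (n + 1), y ^ k * (Bc α (n + 1) k : ℂ) := by
    rw [hcols.of_norm.tsum_eq_zero_add]
    simp only [bellTerm_zero, mul_zero, tsum_zero, zero_add]
    exact tsum_congr (tsum_pow_mul_bellTerm_succ y w)
  refine ⟨?_, ?_, ?_⟩
  · have := (summable_nat_add_iff 1).2 h1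
    simp only [bellTerm_of_ne_zero w 1 (Nat.add_one_ne_zero _)] at this
    exact this
  · rw [← hG1, Complex.exp_eq_exp_ℂ, hf.exp_mul_tsum_eq_one_add_tsum_tsum h1, hcol_sums]
  · have := (summable_nat_add_iff 1).2 hcols
    simp only [tsum_pow_mul_bellTerm_succ] at this
    exact this
end
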